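/- arXiv:2101.07575 — 6 statements merged into one kernel-verified Lean document; each statement's English description precedes it below -/
import Mathlib

section
/- Let T_N be negative binomial with parameters N ≥ 1 and p ∈ (0,1), i.e., P(T_N = t) = C(t+N-1, N-1) p^N (1-p)^t for t = 0,1,2,.... Then E[N/(T_N + N)] = p^N · ₂F₁(N, N; N+1; 1-p), where ₂F₁ is the Gauss hypergeometric function. -/
/-!
The identity holds term by term in `t`: `(N)ₜ / (N+1)ₜ = N / (N + t)` by telescoping, and
`(N)ₜ / t! = C(t+N-1, N-1)`.
-/

/-- The Pochhammer symbol (rising factorial) `(x)ₙ = x(x+1)⋯(x+n-1)`. -/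
noncomputable def poch (x : ℝ) (n : ℕ) : ℝ := ∏ i ∈ Finset.range n, (x + i)

/-- The Gauss hypergeometric series `₂F₁(a, b; c; z)`. -/
noncomputable def hyp2F1 (a b c z : ℝ) : ℝ :=
  ∑' n : ℕ, poch a n * poch b n / (poch c n * n.factorial) * z ^ n

open Nat

lemma poch_succ (x : ℝ) (n : ℕ) : poch x (n + 1) = poch x n * (x + n) :=
  Finset.prod_range_succ _ n

lemma poch_pos {x : ℝ} (hx : 0 < x) (n : ℕ) : 0 < poch x n :=
  Finset.prod_pos fun i _ => by positivity

lemma poch_natCast (n k : ℕ) : poch n k = n.ascFactorial k := by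
  simp [poch, ascFactorial_eq_prod_range]

lemma mul_poch_add_one (x : ℝ) (n : ℕ) : x * poch (x + 1) n = (x + n) * poch x n := by
  induction n with
  | zero => simp [poch]
  | succ n ih =>
    rw [poch_succ, poch_succ, ← mul_assoc, ih]
    push_cast
    ring

lemma poch_div_poch_add_one {x : ℝ} (hx : 0 < x) (n : ℕ) :
    poch x n / poch (x + 1) n = x / (x + n) := by
  have hpos : 0 < poch (x + 1) n := poch_pos (by linarith) n
  rw [div_eq_div_iff hpos.ne' (by positivity), mul_poch_add_one, mul_comm]

lemma poch_natCast_div_factorial {N : ℕ} (hN : 1 ≤ N) (t : ℕ) :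
    poch N t / t ! = ((t + N - 1).choose (N - 1) : ℝ) := by
  obtain ⟨n, rfl⟩ : ∃ n, N = n + 1 := ⟨N - 1, by omega⟩
  rw [poch_natCast, ascFactorial_eq_factorial_mul_choose, add_tsub_cancel_right,
    ← add_assoc, add_tsub_cancel_right, add_comm n t, ← choose_symm_add]
  push_cast
  field_simp

theorem ml_estimator_first_moment_general (N : ℕ) (hN : 1 ≤ N) (p : ℝ) :
    (∑' t : ℕ, ((N : ℝ) / (t + N)) *
        (((t + N - 1).choose (N - 1) : ℝ) * p ^ N * (1 - p) ^ t))
      = p ^ N * hyp2F1 N N (N + 1) (1 - p) := by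
  rw [hyp2F1, ← tsum_mul_left]
  refine tsum_congr fun t => ?_
  have hNpos : (0 : ℝ) < N := by exact_mod_cast hN
  rw [mul_comm (poch _ t) (t ! : ℝ), mul_div_mul_comm, poch_div_poch_add_one hNpos,
    poch_natCast_div_factorial hN, add_comm (N : ℝ)]
  ring

/-- First moment of the ML estimator: if `T_N` is negative binomial with
pmf `P(T_N = t) = C(t+N-1, N-1) p^N (1-p)^t`, then
`E[N/(T_N + N)] = p^N · ₂F₁(N, N; N+1; 1-p)`. -/
theorem ml_estimator_first_moment (N : ℕ) (hN : 1 ≤ N) (p : ℝ)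
    (hp : 0 < p) (hp1 : p < 1) :
    (∑' t : ℕ, ((N : ℝ) / (t + N)) *
        (((t + N - 1).choose (N - 1) : ℝ) * p ^ N * (1 - p) ^ t))
      = p ^ N * hyp2F1 N N (N + 1) (1 - p) :=
  ml_estimator_first_moment_general N hN p
end

section
/- Let T_N be negative binomial with parameters N ≥ 1 and p ∈ (0,1). Then E[N/(T_N + N)] = (N p^N / (1-p)^N) · B_{1-p}(N, 1-N), where B_x(α,β) = ∫_0^x y^{α-1}(1-y)^{β-1} dy is the incomplete beta function. -/
/-- The incomplete beta function `B_x(a, b) = ∫_0^x y^{a-1} (1-y)^{b-1} dy`. -/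
noncomputable def incBeta (x a b : ℝ) : ℝ := ∫ y in (0:ℝ)..x, y ^ (a - 1) * (1 - y) ^ (b - 1)

/-- First moment of the ML estimator in terms of the incomplete beta function:
`E[N/(T_N + N)] = (N p^N / (1-p)^N) · B_{1-p}(N, 1-N)` for `T_N` negative
binomial with parameters `N` and `p`. -/
theorem ml_first_moment_incomplete_beta (N : ℕ) (hN : 1 ≤ N) (p : ℝ)
    (hp : 0 < p) (hp1 : p < 1) :
    (∑' t : ℕ, ((N : ℝ) / (t + N)) *
        (((t + N - 1).choose (N - 1) : ℝ) * p ^ N * (1 - p) ^ t))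
      = (N * p ^ N / (1 - p) ^ N) * incBeta (1 - p) N (1 - N) := by
  obtain ⟨k, rfl⟩ : ∃ k, N = k + 1 := ⟨N - 1, by omega⟩
  set q : ℝ := 1 - p with hq
  have hq0 : 0 < q := by simp only [hq]; linarith
  have hq1 : q < 1 := by simp only [hq]; linarith
  set f : ℕ → ℝ → ℝ := fun t y => ((t + k).choose k : ℝ) * y ^ (t + k) with hfdef
  -- value of each integral
  have hint : ∀ t : ℕ, ∫ y in Set.Ioc (0:ℝ) q, f t y
      = ((t + k).choose k : ℝ) * (q ^ (t + k + 1) / (t + k + 1)) := by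
    intro t
    rw [← intervalIntegral.integral_of_le hq0.le, intervalIntegral.integral_const_mul,
      integral_pow]
    push_cast
    ring
  -- integrability
  have hInt : ∀ t : ℕ, MeasureTheory.IntegrableOn (f t) (Set.Ioc (0:ℝ) q) := fun t =>
    (continuous_const.mul (continuous_pow _)).integrableOn_Ioc
  -- summability of integrals of norms
  have hsum : Summable fun t : ℕ => ∫ y in Set.Ioc (0:ℝ) q, ‖f t y‖ := by
    have hnn : ∀ t : ℕ, ∀ y ∈ Set.Ioc (0:ℝ) q, 0 ≤ f t y := by
      intro t y hy
      exact mul_nonneg (Nat.cast_nonneg _) (pow_nonneg hy.1.le _)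
    have heq : ∀ t : ℕ, (∫ y in Set.Ioc (0:ℝ) q, ‖f t y‖)
        = ((t + k).choose k : ℝ) * (q ^ (t + k + 1) / (t + k + 1)) := by
      intro t
      rw [← hint t]
      refine MeasureTheory.setIntegral_congr_fun measurableSet_Ioc fun y hy => ?_
      exact Real.norm_of_nonneg (hnn t y hy)
    simp only [heq]
    apply Summable.of_nonneg_of_le
      (fun t => mul_nonneg (Nat.cast_nonneg _)
        (div_nonneg (pow_nonneg hq0.le _) (by positivity)))
      (fun t => ?_)
      ((summable_choose_mul_geometric_of_norm_lt_one k
        (r := q) (by rw [Real.norm_eq_abs, abs_of_pos hq0]; exact hq1)))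
    have h1 : q ^ (t + k + 1) / ((t : ℝ) + k + 1) ≤ q ^ t := by
      have : q ^ (t + k + 1) ≤ q ^ t := pow_le_pow_of_le_one hq0.le hq1.le (by omega)
      calc q ^ (t + k + 1) / ((t : ℝ) + k + 1) ≤ q ^ (t + k + 1) / 1 := by
            apply div_le_div_of_nonneg_left (pow_nonneg hq0.le _) one_pos ?_
            · linarith [Nat.cast_nonneg (α := ℝ) t, Nat.cast_nonneg (α := ℝ) k]
        _ = q ^ (t + k + 1) := div_one _
        _ ≤ q ^ t := this
    calc ((t + k).choose k : ℝ) * (q ^ (t + k + 1) / ((t:ℝ) + k + 1))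
        ≤ ((t + k).choose k : ℝ) * q ^ t :=
          mul_le_mul_of_nonneg_left h1 (Nat.cast_nonneg _)
      _ = _ := rfl
  -- swap sum and integral
  have hswap : (∑' t : ℕ, ∫ y in Set.Ioc (0:ℝ) q, f t y)
      = ∫ y in Set.Ioc (0:ℝ) q, ∑' t : ℕ, f t y :=
    MeasureTheory.integral_tsum_of_summable_integral_norm hInt hsum
  -- pointwise identification of the integrand
  have hpt : ∀ y ∈ Set.Ioc (0:ℝ) q,
      y ^ (((k:ℝ)+1) - 1) * (1 - y) ^ ((1 - ((k:ℝ)+1)) - 1) = ∑' t : ℕ, f t y := by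
    intro y hy
    have hy0 : 0 < y := hy.1
    have hy1 : y < 1 := lt_of_le_of_lt hy.2 hq1
    have hylt : ‖y‖ < 1 := by rw [Real.norm_eq_abs, abs_of_pos hy0]; exact hy1
    have hts : ∑' t : ℕ, f t y = (1 / (1 - y) ^ (k + 1)) * y ^ k := by
      have : ∀ t : ℕ, f t y = (((t + k).choose k : ℝ) * y ^ t) * y ^ k := by
        intro t; simp only [hfdef]; rw [pow_add]; ring
      simp only [this]
      rw [tsum_mul_right, tsum_choose_mul_geometric_of_norm_lt_one k hylt]
    rw [hts]
    have h1 : ((k:ℝ)+1) - 1 = (k : ℝ) := by ring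
    have h2 : (1 - ((k:ℝ)+1)) - 1 = -((k:ℝ)+1) := by ring
    have h1y : 0 < 1 - y := by linarith
    rw [h1, h2, Real.rpow_natCast, Real.rpow_neg h1y.le]
    rw [show ((k:ℝ)+1) = ((k+1 : ℕ) : ℝ) by push_cast; ring, Real.rpow_natCast]
    rw [one_div]
    ring
  -- identify incBeta with the swapped integral
  have hbeta : incBeta q ((k:ℝ)+1) (1 - ((k:ℝ)+1))
      = ∑' t : ℕ, ((t + k).choose k : ℝ) * (q ^ (t + k + 1) / (t + k + 1)) := by
    rw [incBeta, intervalIntegral.integral_of_le hq0.le]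
    rw [MeasureTheory.setIntegral_congr_fun measurableSet_Ioc hpt, ← hswap]
    exact tsum_congr hint
  push_cast
  rw [hbeta, tsum_mul_left.symm]
  apply tsum_congr
  intro t
  rw [show (t + (k + 1) - 1) = t + k from by omega]
  have ht1 : ((t:ℝ) + k + 1) ≠ 0 := by positivity
  have hqn : q ≠ 0 := ne_of_gt hq0
  have hqpow : q ^ (t + k + 1) = q ^ t * q ^ (k + 1) := by rw [← pow_add]; ring_nf
  rw [hqpow]
  field_simp
  ring
end

section
/- For p ∈ (0,1) and integer N ≥ 1, E[N/(T_N + N)] = p + Σ_{n=1}^∞ p(1-p)^n / C(N+n, n), where T_N is negative binomial with parameters N and p. In particular the bias of the ML estimator p̂_ml = N/(T_N+N) equals Σ_{n=1}^∞ p(1-p)^n / C(N+n, n) > 0. -/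
lemma binom_step (s K k : ℕ) :
    ((s:ℝ)+k+K+3) * ((s+K).choose K) + ((k:ℝ)+2) * ((s+K).choose (K+1))
      = ((K:ℝ)+k+3) * ((s+K+1).choose (K+1)) := by
  have h1 := Nat.choose_succ_succ (s+K) K
  have h2 := Nat.choose_succ_right_eq (s+K) K
  rw [Nat.add_sub_cancel] at h2
  have h1' : (((s+K+1).choose (K+1) : ℝ)) = ((s+K).choose K : ℝ) + ((s+K).choose (K+1) : ℝ) := by
    exact_mod_cast congrArg Nat.cast h1
  have h2' : ((s+K).choose (K+1) : ℝ) * ((K:ℝ)+1) = ((s+K).choose K : ℝ) * s := by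
    exact_mod_cast congrArg Nat.cast h2
  rw [h1']; linear_combination -h2'

lemma key_sum (K t : ℕ) : ∀ k, k ≤ t →
    ∑ n ∈ Finset.range (k+1), (((t - n + K).choose (t - n) : ℝ) / ((K + 2 + n).choose n))
      = ((K:ℝ)+2) * ((t+K+1).choose (K+1)) / ((t:ℝ)+K+2)
        - ((k:ℝ)+1) * ((t - k + K).choose (K+1)) / (((t:ℝ)+K+2) * ((K+2+k).choose k)) := by
  intro k
  induction k with
  | zero =>
    intro _
    simp only [Nat.cast_zero, zero_add, Finset.sum_range_one, Nat.sub_zero, Nat.add_zero,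
      Nat.choose_zero_right, Nat.cast_one, mul_one]
    have hsym : ((t+K).choose t : ℝ) = ((t+K).choose K : ℝ) := by
      have : (t+K).choose t = (t+K).choose K := by
        rw [← Nat.choose_symm (show K ≤ t + K by omega), Nat.add_sub_cancel]
      exact_mod_cast congrArg Nat.cast this
    have hb : ((t:ℝ)+K+2)*((t+K).choose K)
        = ((K:ℝ)+2) * ((t+K+1).choose (K+1)) - ((t+K).choose (K+1)) := by
      have h1 := Nat.choose_succ_succ (t+K) K
      have h2 := Nat.choose_succ_right_eq (t+K) K
      rw [Nat.add_sub_cancel] at h2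
      have h1' : (((t+K+1).choose (K+1) : ℝ)) = ((t+K).choose K : ℝ) + ((t+K).choose (K+1) : ℝ) := by
        exact_mod_cast congrArg Nat.cast h1
      have h2' : ((t+K).choose (K+1) : ℝ) * ((K:ℝ)+1) = ((t+K).choose K : ℝ) * t := by
        exact_mod_cast congrArg Nat.cast h2
      rw [h1']; linear_combination -h2'
    have ht : ((t:ℝ)+K+2) ≠ 0 := by positivity
    rw [hsym]
    field_simp
    linear_combination hb
  | succ k ih =>
    intro hk1
    have hk : k ≤ t := by omega
    obtain ⟨s, rfl⟩ : ∃ s, t = k + 1 + s := ⟨t - (k+1), by omega⟩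
    rw [Finset.sum_range_succ, ih hk]
    have e1 : k + 1 + s - (k+1) = s := by omega
    have e2 : k + 1 + s - k = s + 1 := by omega
    have e3 : K + 2 + (k+1) = K + 2 + k + 1 := rfl
    have e4 : s + 1 + K = s + K + 1 := by omega
    rw [e1, e2]
    simp only [e3, e4]
    have hm0 := Nat.add_one_mul_choose_eq (K+2+k) k
    have hm : ((K:ℝ)+k+3) * ((K+2+k).choose k) = ((K+2+k+1).choose (k+1)) * ((k:ℝ)+1) := by
      have : (K+2+k+1) * (K+2+k).choose k = (K+2+k+1).choose (k+1) * (k+1) := hm0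
      have := congrArg (Nat.cast (R := ℝ)) this
      push_cast at this
      linear_combination this
    have hsym2 : ((s+K).choose s : ℝ) = ((s+K).choose K : ℝ) := by
      have : (s+K).choose s = (s+K).choose K := by
        rw [← Nat.choose_symm (show K ≤ s + K by omega), Nat.add_sub_cancel]
      exact_mod_cast congrArg Nat.cast this
    have hb := binom_step s K k
    have c1 : (0:ℝ) < ((K+2+k).choose k : ℝ) := by
      exact_mod_cast Nat.choose_pos (by omega)
    have c2 : (0:ℝ) < ((K+2+k+1).choose (k+1) : ℝ) := by
      exact_mod_cast Nat.choose_pos (by omega)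
    have ht : ((k:ℝ)+1+s+K+2) ≠ 0 := by positivity
    push_cast
    rw [hsym2]
    have key : (((s+K).choose K : ℝ))/((K+2+k+1).choose (k+1))
        = ((k:ℝ)+1)*((s+K+1).choose (K+1))/((((k:ℝ)+1+s)+K+2)*((K+2+k).choose k))
          - ((k:ℝ)+2)*((s+K).choose (K+1))/((((k:ℝ)+1+s)+K+2)*((K+2+k+1).choose (k+1))) := by
      rw [div_sub_div _ _ (by positivity) (by positivity),
        div_eq_div_iff (by positivity) (by positivity)]
      linear_combination ((((k:ℝ)+1+s+K+2) * ((K+2+k).choose k) * ((K+2+k+1).choose (k+1))) : ℝ) * hb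
        + ((((k:ℝ)+1+s+K+2) * ((s+K+1).choose (K+1)) * ((K+2+k+1).choose (k+1))) : ℝ) * hm
    linear_combination key

lemma conv_sum (K t : ℕ) :
    ∑ n ∈ Finset.range (t+1), (((t - n + K).choose (t - n) : ℝ) / ((K + 2 + n).choose n))
      = ((K:ℝ)+2) * ((t+K+1).choose (K+1)) / ((t:ℝ)+K+2) := by
  have := key_sum K t t le_rfl
  rw [this, Nat.sub_self]
  simp [Nat.choose_succ_self]

lemma conv_sum' (K t : ℕ) :
    ∑ m ∈ Finset.range (t+1), (((m+K).choose K : ℝ) / ((K+2+(t-m)).choose (t-m)))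
      = ((K:ℝ)+2) * ((t+K+1).choose (K+1)) / ((t:ℝ)+K+2) := by
  rw [← conv_sum K t, ← Finset.sum_range_reflect]
  apply Finset.sum_congr rfl
  intro j hj
  rw [Finset.mem_range] at hj
  have h1 : t + 1 - 1 - j = t - j := by omega
  have h2 : t - (t - j) = j := by omega
  rw [h1, h2]
  congr 2
  rw [← Nat.choose_symm (show K ≤ t - j + K by omega), Nat.add_sub_cancel]

lemma conv_antidiag (K t : ℕ) (x : ℝ) :
    ∑ kl ∈ Finset.HasAntidiagonal.antidiagonal t,
        ((((kl.1+K).choose K : ℝ)) * x ^ kl.1) * (x ^ kl.2 / ((K+2+kl.2).choose kl.2))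
      = x ^ t * (((K:ℝ)+2) * ((t+K+1).choose (K+1)) / ((t:ℝ)+K+2)) := by
  rw [Finset.Nat.sum_antidiagonal_eq_sum_range_succ_mk]
  have : ∀ m ∈ Finset.range (t+1),
      ((((m+K).choose K : ℝ)) * x ^ m) * (x ^ (t-m) / ((K+2+(t-m)).choose (t-m)))
        = x ^ t * (((m+K).choose K : ℝ) / ((K+2+(t-m)).choose (t-m))) := by
    intro m hm
    rw [Finset.mem_range] at hm
    have hx : x ^ m * x ^ (t - m) = x ^ t := by
      rw [← pow_add]; congr 1; omega
    rw [show ((((m+K).choose K : ℝ)) * x ^ m) * (x ^ (t-m) / ((K+2+(t-m)).choose (t-m)))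
        = (x ^ m * x ^ (t-m)) * (((m+K).choose K : ℝ) / ((K+2+(t-m)).choose (t-m))) from by ring,
      hx]
  rw [Finset.sum_congr rfl this, ← Finset.mul_sum, conv_sum']

/-- Series form of the first moment of the ML estimator and positivity of its
bias: for `T_N` negative binomial with parameters `N ≥ 1` and `p ∈ (0,1)`,
`E[N/(T_N+N)] = p + Σ_{n=1}^∞ p(1-p)^n / C(N+n, n)` and the bias
`Σ_{n=1}^∞ p(1-p)^n / C(N+n, n)` is positive. -/
theorem ml_estimator_bias (N : ℕ) (hN : 1 ≤ N) (p : ℝ) (hp : 0 < p) (hp1 : p < 1) :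
    (∑' t : ℕ, ((N : ℝ) / (t + N)) *
        (((t + N - 1).choose (N - 1) : ℝ) * p ^ N * (1 - p) ^ t))
      = p + ∑' n : ℕ, p * (1 - p) ^ (n + 1) / ((N + (n + 1)).choose (n + 1) : ℝ) ∧
    0 < ∑' n : ℕ, p * (1 - p) ^ (n + 1) / ((N + (n + 1)).choose (n + 1) : ℝ) := by
  have hq0 : (0:ℝ) < 1 - p := by linarith
  have hq1 : 1 - p < 1 := by linarith
  have hqn : ‖1 - p‖ < 1 := by rw [Real.norm_eq_abs, abs_of_pos hq0]; exact hq1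
  have hchoose1 : ∀ m k : ℕ, (1:ℝ) ≤ ((m + k).choose k : ℝ) := by
    intro m k
    exact_mod_cast Nat.succ_le_of_lt (Nat.choose_pos (by omega))
  have hbs : Summable (fun n : ℕ => p * (1 - p) ^ (n + 1) / ((N + (n + 1)).choose (n + 1) : ℝ)) := by
    apply Summable.of_nonneg_of_le (fun n => by positivity) (fun n => ?_)
      ((summable_geometric_of_lt_one hq0.le hq1).mul_left p)
    calc p * (1 - p) ^ (n + 1) / ((N + (n + 1)).choose (n + 1) : ℝ)
        ≤ p * (1 - p) ^ (n + 1) := div_le_self (by positivity) (hchoose1 N (n+1))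
      _ ≤ p * (1 - p) ^ n := by
          apply mul_le_mul_of_nonneg_left _ hp.le
          exact pow_le_pow_of_le_one hq0.le hq1.le (by omega)
  have hbpos : 0 < ∑' n : ℕ, p * (1 - p) ^ (n + 1) / ((N + (n + 1)).choose (n + 1) : ℝ) := by
    apply Summable.tsum_pos hbs (fun n => by positivity) 0
    have hc : (0:ℝ) < ((N + (0 + 1)).choose (0 + 1) : ℝ) := by
      exact_mod_cast Nat.choose_pos (by omega)
    exact div_pos (by positivity) hc
  refine ⟨?_, hbpos⟩
  rcases Nat.lt_or_ge N 2 with hN2 | hN2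
  · -- N = 1
    have h1 : N = 1 := by omega
    subst h1
    have hf : Summable (fun t : ℕ => p * (1 - p) ^ t / ((t:ℝ) + 1)) := by
      apply Summable.of_nonneg_of_le (fun n => by positivity) (fun n => ?_)
        ((summable_geometric_of_lt_one hq0.le hq1).mul_left p)
      exact div_le_self (by positivity) (by linarith [Nat.cast_nonneg (α := ℝ) n])
    have hL : (∑' t : ℕ, ((1 : ℝ) / (t + 1)) *
        (((t + 1 - 1).choose (1 - 1) : ℝ) * p ^ 1 * (1 - p) ^ t))
        = ∑' t : ℕ, p * (1 - p) ^ t / ((t:ℝ) + 1) := by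
      apply tsum_congr; intro t
      rw [show t + 1 - 1 = t by omega]
      norm_num; ring
    rw [show ((1:ℕ):ℝ) = (1:ℝ) by norm_num] at *
    rw [hL, Summable.tsum_eq_zero_add hf]
    norm_num
    apply tsum_congr; intro n
    rw [show 1 + (n + 1) = n + 2 by omega]
    have : (n+2).choose (n+1) = n + 2 := by
      rw [← Nat.choose_symm (show n + 1 ≤ n + 2 by omega)]
      norm_num
    rw [this]
    push_cast
    ring
  · obtain ⟨K, rfl⟩ : ∃ K, N = K + 2 := ⟨N - 2, by omega⟩
    have hA : Summable (fun n : ℕ => (1 - p) ^ n / ((K + 2 + n).choose n : ℝ)) := by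
      apply Summable.of_nonneg_of_le (fun n => by positivity) (fun n => ?_)
        (summable_geometric_of_lt_one hq0.le hq1)
      exact div_le_self (by positivity) (hchoose1 (K+2) n)
    have hAn : Summable (fun n : ℕ => ‖(1 - p) ^ n / ((K + 2 + n).choose n : ℝ)‖) := by
      simpa only [Real.norm_eq_abs] using summable_abs_iff.mpr hA
    have hD : Summable (fun m : ℕ => (((m + K).choose K : ℝ)) * (1 - p) ^ m) :=
      summable_choose_mul_geometric_of_norm_lt_one K hqn
    have hDn : Summable (fun m : ℕ => ‖(((m + K).choose K : ℝ)) * (1 - p) ^ m‖) := by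
      simpa only [Real.norm_eq_abs] using summable_abs_iff.mpr hD
    have hDval : (∑' m : ℕ, (((m + K).choose K : ℝ)) * (1 - p) ^ m) = 1 / p ^ (K + 1) := by
      have := tsum_choose_mul_geometric_of_norm_lt_one (𝕜 := ℝ) K hqn
      simpa [sub_sub_cancel] using this
    have cauchy := tsum_mul_tsum_eq_tsum_sum_antidiagonal_of_summable_norm hDn hAn
    rw [hDval] at cauchy
    have cconv : (∑' t : ℕ, ∑ kl ∈ Finset.HasAntidiagonal.antidiagonal t,
          ((((kl.1 + K).choose K : ℝ)) * (1 - p) ^ kl.1) *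
            ((1 - p) ^ kl.2 / ((K + 2 + kl.2).choose kl.2 : ℝ)))
        = ∑' t : ℕ, (1 - p) ^ t *
            (((K:ℝ) + 2) * ((t + K + 1).choose (K + 1) : ℝ) / ((t:ℝ) + K + 2)) :=
      tsum_congr fun t => conv_antidiag K t (1 - p)
    have hLHS : (∑' t : ℕ, (((K + 2 : ℕ) : ℝ) / (t + ((K + 2 : ℕ) : ℝ))) *
          (((t + (K + 2) - 1).choose (K + 2 - 1) : ℝ) * p ^ (K + 2) * (1 - p) ^ t))
        = p ^ (K + 2) * ∑' t : ℕ, (1 - p) ^ t *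
            (((K:ℝ) + 2) * ((t + K + 1).choose (K + 1) : ℝ) / ((t:ℝ) + K + 2)) := by
      rw [← tsum_mul_left]
      apply tsum_congr; intro t
      rw [show t + (K + 2) - 1 = t + K + 1 by omega, show K + 2 - 1 = K + 1 by omega]
      push_cast
      ring
    rw [hLHS, ← cconv, ← cauchy]
    have hRHS : p * ∑' n : ℕ, (1 - p) ^ n / ((K + 2 + n).choose n : ℝ)
        = p + ∑' n : ℕ, p * (1 - p) ^ (n + 1) / ((K + 2 + (n + 1)).choose (n + 1) : ℝ) := by
      rw [← tsum_mul_left, Summable.tsum_eq_zero_add (hA.mul_left p)]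
      norm_num
      apply tsum_congr; intro n
      ring
    rw [← hRHS]
    have hpne : p ≠ 0 := ne_of_gt hp
    field_simp
    ring
end

section
/- For p ∈ (0,1) and integer N ≥ 2, the bias of p̂_b = (N-1)/(T_N + N) satisfies E[p̂_b] - p = -p/N + ((N-1)/N) Σ_{n=1}^∞ p(1-p)^n / C(N+n, n), where T_N is negative binomial with parameters N and p. -/
open Nat Finset

private lemma pascal_split (n : ℕ) (g : ℕ → ℝ) :
    ∑ j ∈ range (n+2), (-1:ℝ)^(n+1+j) * ((n+1).choose j) * g j
    = (∑ j ∈ range (n+1), (-1:ℝ)^(n+j) * (n.choose j) * g (j+1))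
      - ∑ j ∈ range (n+1), (-1:ℝ)^(n+j) * (n.choose j) * g j := by
  rw [Finset.sum_range_succ' (fun j => (-1:ℝ)^(n+1+j) * ((n+1).choose j) * g j) (n+1)]
  rw [Finset.sum_range_succ' (fun j => (-1:ℝ)^(n+j) * (n.choose j) * g j) n]
  have e1 : ∀ i ∈ range (n+1), (-1:ℝ)^(n+1+(i+1)) * (((n+1).choose (i+1) : ℕ) : ℝ) * g (i+1)
      = (-1:ℝ)^(n+i) * (n.choose i) * g (i+1) + (-1:ℝ)^(n+i) * (n.choose (i+1)) * g (i+1) := by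
    intro i _
    rw [Nat.choose_succ_succ n i]
    have hsgn : (-1:ℝ)^(n+1+(i+1)) = (-1:ℝ)^(n+i) := by
      rw [show n+1+(i+1) = (n+i)+2 by ring, pow_add]; norm_num
    rw [hsgn]; push_cast; ring
  rw [Finset.sum_congr rfl e1, Finset.sum_add_distrib]
  rw [Finset.sum_range_succ (fun i => (-1:ℝ)^(n+i) * ((n.choose (i+1) : ℕ) : ℝ) * g (i+1)) n]
  have e2 : ∀ i ∈ range n, (-1:ℝ)^(n+i) * ((n.choose (i+1) : ℕ) : ℝ) * g (i+1)
      = -((-1:ℝ)^(n+(i+1)) * ((n.choose (i+1) : ℕ) : ℝ) * g (i+1)) := by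
    intro i _
    rw [show n+(i+1) = (n+i)+1 by ring, pow_succ]; ring
  rw [Finset.sum_congr rfl e2]
  simp [Nat.choose_succ_self, pow_succ, pow_add]
  ring

private lemma lemD (n : ℕ) : ∀ m : ℕ,
    ∑ j ∈ range (n+1), (-1:ℝ)^(n+j) * (n.choose j) * ((m+j).choose n) = 1 := by
  induction n with
  | zero => intro m; simp
  | succ n ih =>
    intro m
    have hps : (∑ j ∈ range (n+2), (-1:ℝ)^(n+1+j) * ((n+1).choose j) * ((m+j).choose (n+1)))
        = (∑ j ∈ range (n+1), (-1:ℝ)^(n+j) * (n.choose j) * ((m+(j+1)).choose (n+1)))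
          - ∑ j ∈ range (n+1), (-1:ℝ)^(n+j) * (n.choose j) * ((m+j).choose (n+1)) :=
      pascal_split n (fun j => (((m+j).choose (n+1) : ℕ) : ℝ))
    rw [show n+1+1 = n+2 from rfl, hps, ← Finset.sum_sub_distrib]
    have e : ∀ j ∈ range (n+1),
        ((-1:ℝ)^(n+j) * (n.choose j) * ((m+(j+1)).choose (n+1))
        - (-1:ℝ)^(n+j) * (n.choose j) * ((m+j).choose (n+1)))
        = (-1:ℝ)^(n+j) * (n.choose j) * ((m+j).choose n) := by
      intro j _
      have h : (m+(j+1)).choose (n+1) = (m+j).choose n + (m+j).choose (n+1) := by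
        rw [show m+(j+1) = (m+j)+1 by ring]; exact Nat.choose_succ_succ _ _
      rw [h]; push_cast; ring
    rw [Finset.sum_congr rfl e, ih m]

private lemma choose_div_succ (n s : ℕ) :
    ((s.choose (n+1) : ℝ)) / ((s:ℝ)+1) = (s.choose n : ℝ) / ((n:ℝ)+1) - (s.choose n : ℝ) / ((s:ℝ)+1) := by
  rcases le_or_gt n s with h | h
  · have key : (s.choose (n+1) : ℝ) * ((n:ℝ)+1) = (s.choose n : ℝ) * ((s:ℝ) - n) := by
      have hn := Nat.choose_succ_right_eq s n
      have hc : ((s.choose (n+1) * (n+1) : ℕ) : ℝ) = ((s.choose n * (s - n) : ℕ) : ℝ) := by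
        exact_mod_cast congrArg (Nat.cast (R := ℝ)) hn
      push_cast [Nat.cast_sub h] at hc
      linarith
    have h1 : ((s:ℝ)+1) ≠ 0 := by positivity
    have h2 : ((n:ℝ)+1) ≠ 0 := by positivity
    field_simp
    nlinarith [key]
  · rw [Nat.choose_eq_zero_of_lt h, Nat.choose_eq_zero_of_lt (by omega)]
    simp

private lemma lemC (n : ℕ) : ∀ m : ℕ,
    ∑ j ∈ range (n+1), (-1:ℝ)^(n+j) * (n.choose j) * (((m+j).choose n : ℝ) / (((m+j : ℕ) : ℝ)+1))
    = (n ! : ℝ) * (m !) / ((n+m+1)!) := by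
  induction n with
  | zero =>
    intro m
    have hfm : ((m ! : ℕ) : ℝ) ≠ 0 := by positivity
    simp [Nat.factorial_succ]
    field_simp
  | succ n ih =>
    intro m
    have hU : ∀ m' : ℕ,
        ∑ j ∈ range (n+1), (-1:ℝ)^(n+j) * (n.choose j)
          * (((m'+j).choose (n+1) : ℝ) / (((m'+j : ℕ) : ℝ)+1))
        = 1/((n:ℝ)+1) - (n ! : ℝ) * (m' !) / ((n+m'+1)!) := by
      intro m'
      have e : ∀ j ∈ range (n+1),
          (-1:ℝ)^(n+j) * (n.choose j) * (((m'+j).choose (n+1) : ℝ) / (((m'+j : ℕ) : ℝ)+1))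
          = (1/((n:ℝ)+1)) * ((-1:ℝ)^(n+j) * (n.choose j) * ((m'+j).choose n))
            - (-1:ℝ)^(n+j) * (n.choose j) * (((m'+j).choose n : ℝ) / (((m'+j : ℕ) : ℝ)+1)) := by
        intro j _
        rw [choose_div_succ n (m'+j)]
        push_cast
        ring
      rw [Finset.sum_congr rfl e, Finset.sum_sub_distrib, ← Finset.mul_sum, lemD n m', ih m']
      ring
    have hps : (∑ j ∈ range (n+2), (-1:ℝ)^(n+1+j) * ((n+1).choose j)
          * (((m+j).choose (n+1) : ℝ) / (((m+j : ℕ) : ℝ)+1)))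
        = (∑ j ∈ range (n+1), (-1:ℝ)^(n+j) * (n.choose j)
          * (((m+(j+1)).choose (n+1) : ℝ) / (((m+(j+1) : ℕ) : ℝ)+1)))
          - ∑ j ∈ range (n+1), (-1:ℝ)^(n+j) * (n.choose j)
          * (((m+j).choose (n+1) : ℝ) / (((m+j : ℕ) : ℝ)+1)) :=
      pascal_split n (fun j => (((m+j).choose (n+1) : ℝ) / (((m+j : ℕ) : ℝ)+1)))
    rw [show n+1+1 = n+2 from rfl, hps]
    have hshift : (∑ j ∈ range (n+1), (-1:ℝ)^(n+j) * (n.choose j)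
          * (((m+(j+1)).choose (n+1) : ℝ) / (((m+(j+1) : ℕ) : ℝ)+1)))
        = ∑ j ∈ range (n+1), (-1:ℝ)^(n+j) * (n.choose j)
          * ((((m+1)+j).choose (n+1) : ℝ) / ((((m+1)+j : ℕ) : ℝ)+1)) := by
      apply Finset.sum_congr rfl
      intro j _
      rw [show m+(j+1) = (m+1)+j by ring]
    rw [hshift, hU (m+1), hU m]
    have h1 : ((n+m+1)! : ℝ) ≠ 0 := by positivity
    have hfac1 : ((n+(m+1)+1)! : ℝ) = (((n:ℝ)+(m:ℝ)+1)+1) * ((n+m+1)!) := by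
      rw [show n+(m+1)+1 = (n+m+1)+1 by ring, Nat.factorial_succ]; push_cast; ring
    have hfac2 : (((n+1)+m+1)! : ℝ) = (((n:ℝ)+(m:ℝ)+1)+1) * ((n+m+1)!) := by
      rw [show (n+1)+m+1 = (n+m+1)+1 by ring, Nat.factorial_succ]; push_cast; ring
    have hfac3 : ((m+1)! : ℝ) = ((m:ℝ)+1) * (m !) := by
      rw [Nat.factorial_succ]; push_cast; ring
    have hfac4 : (((n+1)!) : ℝ) = ((n:ℝ)+1) * (n !) := by
      rw [Nat.factorial_succ]; push_cast; ring
    rw [hfac1, hfac2, hfac3, hfac4]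
    have h2 : ((n:ℝ)+(m:ℝ)+1)+1 ≠ 0 := by positivity
    field_simp
    ring

private lemma summable_poly_geom (n : ℕ) {q : ℝ} (hq0 : 0 ≤ q) (hq1 : q < 1) :
    Summable (fun t : ℕ => ((t:ℝ)+1)^n * q^t) := by
  have h : ∀ t : ℕ, ((t:ℝ)+1)^n * q^t = ∑ i ∈ range (n+1), (n.choose i : ℝ) * ((t:ℝ)^i * q^t) := by
    intro t
    rw [_root_.add_pow, Finset.sum_mul]
    apply Finset.sum_congr rfl
    intro i _
    simp only [one_pow]
    ring
  rw [show (fun t : ℕ => ((t:ℝ)+1)^n * q^t)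
      = (fun t : ℕ => ∑ i ∈ range (n+1), (n.choose i : ℝ) * ((t:ℝ)^i * q^t)) from funext h]
  apply summable_sum
  intro i _
  exact (summable_pow_mul_geometric_of_norm_lt_one (R := ℝ) i
    (by rwa [Real.norm_eq_abs, abs_of_nonneg hq0])).mul_left _

private lemma summable_B (n j : ℕ) (hj : j ≤ n) {q : ℝ} (hq0 : 0 ≤ q) (hq1 : q < 1) :
    Summable (fun m : ℕ => (((m+j).choose n : ℝ) / (((m+j : ℕ) : ℝ)+1)) * q^m) := by
  refine Summable.of_nonneg_of_le (f := fun m : ℕ => ((n:ℝ)+1)^n * (((m:ℝ)+1)^n * q^m))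
    (g := fun m : ℕ => (((m+j).choose n : ℝ) / (((m+j : ℕ) : ℝ)+1)) * q^m)
    (fun m => by positivity) (fun m => ?_) ?_
  · 
    have hb : ((m+j).choose n : ℝ) ≤ ((n:ℝ)+1)^n * ((m:ℝ)+1)^n := by
      calc ((m+j).choose n : ℝ) ≤ (((m+j : ℕ) : ℝ))^n := by
            exact_mod_cast Nat.choose_le_pow (m+j) n
        _ ≤ ((((m+1)*(n+1) : ℕ) : ℝ))^n := by
            apply pow_le_pow_left₀ (by positivity)
            exact_mod_cast (by nlinarith : m + j ≤ (m+1)*(n+1))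
        _ = ((n:ℝ)+1)^n * ((m:ℝ)+1)^n := by push_cast; rw [← mul_pow]; ring_nf
    have hd : (1:ℝ) ≤ (((m+j : ℕ) : ℝ)) + 1 := by
      have : (0:ℝ) ≤ (((m+j : ℕ) : ℝ)) := Nat.cast_nonneg _
      linarith
    calc (((m+j).choose n : ℝ) / (((m+j : ℕ) : ℝ)+1)) * q^m
        ≤ ((m+j).choose n : ℝ) * q^m := by
          apply mul_le_mul_of_nonneg_right _ (by positivity)
          exact div_le_self (by positivity) hd
      _ ≤ (((n:ℝ)+1)^n * ((m:ℝ)+1)^n) * q^m := by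
          apply mul_le_mul_of_nonneg_right hb (by positivity)
      _ = ((n:ℝ)+1)^n * (((m:ℝ)+1)^n * q^m) := by ring
  · exact (summable_poly_geom n hq0 hq1).mul_left _

private lemma key_identity (n : ℕ) {q : ℝ} (hq0 : 0 ≤ q) (hq1 : q < 1) :
    ∑' m : ℕ, ((n ! : ℝ) * (m !) / ((n+m+1)!)) * q^m
    = (1-q)^n * ∑' t : ℕ, (((t+n).choose n : ℝ) / (((t+n : ℕ) : ℝ)+1)) * q^t := by
  have step1 : ∀ m : ℕ, ((n ! : ℝ) * (m !) / ((n+m+1)!)) * q^m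
      = ∑ j ∈ range (n+1), (-1:ℝ)^(n+j) * (n.choose j)
          * ((((m+j).choose n : ℝ) / (((m+j : ℕ) : ℝ)+1)) * q^m) := by
    intro m
    rw [← lemC n m, Finset.sum_mul]
    apply Finset.sum_congr rfl
    intro j _
    ring
  rw [tsum_congr step1]
  rw [Summable.tsum_finsetSum (fun j hj => (((summable_B n j
        (Nat.lt_succ_iff.mp (Finset.mem_range.mp hj)) hq0 hq1)).mul_left _))]
  have inner : ∀ j ∈ range (n+1),
      (∑' m : ℕ, (-1:ℝ)^(n+j) * (n.choose j)
          * ((((m+j).choose n : ℝ) / (((m+j : ℕ) : ℝ)+1)) * q^m))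
      = ((-1:ℝ)^(n+j) * (n.choose j) * q^(n-j))
          * ∑' t : ℕ, (((t+n).choose n : ℝ) / (((t+n : ℕ) : ℝ)+1)) * q^t := by
    intro j hj
    have hjn : j ≤ n := Nat.lt_succ_iff.mp (Finset.mem_range.mp hj)
    rw [tsum_mul_left]
    have hinj : Function.Injective (fun t : ℕ => t + (n-j)) := fun a b hab => by
      simpa using hab
    have hsupp : Function.support (fun m : ℕ => (((m+j).choose n : ℝ) / (((m+j : ℕ) : ℝ)+1)) * q^m)
        ⊆ Set.range (fun t : ℕ => t + (n-j)) := by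
      intro m hm
      simp only [Function.mem_support] at hm
      by_contra hc
      simp only [Set.mem_range, not_exists] at hc
      have hmlt : m < n - j := by
        by_contra hmge
        exact hc (m - (n-j)) (by omega)
      have hmj : m + j < n := by omega
      apply hm
      rw [Nat.choose_eq_zero_of_lt hmj]
      simp
    have hre : (∑' m : ℕ, (((m+j).choose n : ℝ) / (((m+j : ℕ) : ℝ)+1)) * q^m)
        = ∑' t : ℕ, ((((t+(n-j))+j).choose n : ℝ) / ((((t+(n-j))+j : ℕ) : ℝ)+1)) * q^(t+(n-j)) :=
      (hinj.tsum_eq hsupp).symm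
    rw [hre]
    have hre2 : ∀ t : ℕ, ((((t+(n-j))+j).choose n : ℝ) / ((((t+(n-j))+j : ℕ) : ℝ)+1)) * q^(t+(n-j))
        = q^(n-j) * ((((t+n).choose n : ℝ) / (((t+n : ℕ) : ℝ)+1)) * q^t) := by
      intro t
      have harg : (t + (n-j)) + j = t + n := by omega
      rw [harg, pow_add]
      ring
    rw [tsum_congr hre2, tsum_mul_left]
    ring
  rw [Finset.sum_congr rfl inner, ← Finset.sum_mul]
  congr 1
  have hap := _root_.add_pow (1:ℝ) (-q) n
  rw [show (1:ℝ) + -q = 1 - q by ring] at hap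
  rw [hap]
  apply Finset.sum_congr rfl
  intro j hj
  have hjn : j ≤ n := Nat.lt_succ_iff.mp (Finset.mem_range.mp hj)
  have hsgn : (-q)^(n-j) = (-1:ℝ)^(n+j) * q^(n-j) := by
    rw [neg_pow, show n+j = (n-j) + 2*j by omega, pow_add, pow_mul]
    norm_num
  rw [hsgn]
  ring

/-- Bias of the estimator `p̂_b = (N-1)/(T_N + N)`: for `T_N` negative binomial
with parameters `N ≥ 2` and `p ∈ (0,1)`,
`E[p̂_b] - p = -p/N + ((N-1)/N) Σ_{n=1}^∞ p(1-p)^n / C(N+n, n)`. -/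
theorem pb_estimator_bias (N : ℕ) (hN : 2 ≤ N) (p : ℝ) (hp : 0 < p) (hp1 : p < 1) :
    (∑' t : ℕ, (((N : ℝ) - 1) / (t + N)) *
        (((t + N - 1).choose (N - 1) : ℝ) * p ^ N * (1 - p) ^ t)) - p
      = -p / N + ((N : ℝ) - 1) / N *
          ∑' n : ℕ, p * (1 - p) ^ (n + 1) / ((N + (n + 1)).choose (n + 1) : ℝ) := by
  obtain ⟨n, rfl⟩ : ∃ n, N = n + 1 := ⟨N-1, by omega⟩
  set q : ℝ := 1 - p with hqdef
  have hq0 : 0 ≤ q := by rw [hqdef]; linarith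
  have hq1 : q < 1 := by rw [hqdef]; linarith
  have hBsummable : Summable (fun m : ℕ => ((n ! : ℝ) * (m !) / ((n+m+1)!)) * q^m) := by
    refine Summable.of_nonneg_of_le (f := fun m : ℕ => q^m)
      (g := fun m : ℕ => ((n ! : ℝ) * (m !) / ((n+m+1)!)) * q^m)
      (fun m => by positivity) (fun m => ?_) ?_
    · 
      have hle : (n ! : ℝ) * (m !) ≤ ((n+m+1)!) := by
        have h1 : n ! * m ! ∣ (n+m)! := Nat.factorial_mul_factorial_dvd_factorial_add n m
        have h2 : n ! * m ! ≤ (n+m)! := Nat.le_of_dvd (Nat.factorial_pos _) h1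
        have h3 : (n+m)! ≤ (n+m+1)! := Nat.factorial_le (by omega)
        exact_mod_cast h2.trans h3
      calc ((n ! : ℝ) * (m !) / ((n+m+1)!)) * q^m
          ≤ 1 * q^m := by
            apply mul_le_mul_of_nonneg_right _ (by positivity)
            rw [div_le_one (by positivity)]
            exact hle
        _ = q^m := by ring
    · exact summable_geometric_of_lt_one hq0 hq1
  have hkey := key_identity n hq0 hq1
  set T : ℝ := ∑' t : ℕ, (((t+n).choose n : ℝ) / (((t+n : ℕ) : ℝ)+1)) * q^t with hT
  set B : ℝ := ∑' m : ℕ, ((n ! : ℝ) * (m !) / ((n+m+1)!)) * q^m with hB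
  have hLHS : (∑' t : ℕ, ((((n+1 : ℕ) : ℝ) - 1) / ((t:ℝ) + ((n+1 : ℕ) : ℝ))) *
        (((t + (n+1) - 1).choose ((n+1) - 1) : ℝ) * p ^ (n+1) * q ^ t))
      = (n : ℝ) * p^(n+1) * T := by
    rw [hT, ← tsum_mul_left]
    apply tsum_congr
    intro t
    have h1 : t + (n+1) - 1 = t + n := by omega
    have h2 : (n+1) - 1 = n := by omega
    rw [h1, h2]
    have hden : ((t:ℝ) + ((n+1 : ℕ) : ℝ)) = (((t+n : ℕ) : ℝ) + 1) := by push_cast; ring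
    rw [hden]
    push_cast
    ring
  have hRHS : (∑' j : ℕ, p * q ^ (j + 1) / (((n+1) + (j + 1)).choose (j + 1) : ℝ))
      = ((n:ℝ)+1) * p * (B - 1/((n:ℝ)+1)) := by
    have hterm : ∀ j : ℕ, p * q ^ (j + 1) / (((n+1) + (j + 1)).choose (j + 1) : ℝ)
        = (((n:ℝ)+1) * p) * (((n ! : ℝ) * ((j+1) !) / ((n+(j+1)+1)!)) * q^(j+1)) := by
      intro j
      have hcc := Nat.add_choose_mul_factorial_mul_factorial (n+1) (j+1)
      have hccR : ((((n+1)+(j+1)).choose (j+1) : ℕ) : ℝ) * (((n+1)! : ℕ) : ℝ) * (((j+1)! : ℕ) : ℝ)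
          = ((((n+1)+(j+1))! : ℕ) : ℝ) := by exact_mod_cast congrArg (Nat.cast (R := ℝ)) hcc
      have hCpos : (0:ℝ) < ((((n+1)+(j+1)).choose (j+1) : ℕ) : ℝ) := by
        exact_mod_cast Nat.choose_pos (by omega)
      have hfc : ((n+(j+1)+1)! : ℕ) = (((n+1)+(j+1))! : ℕ) := by
        rw [show n+(j+1)+1 = (n+1)+(j+1) by omega]
      rw [hfc]
      have hfs : (((n+1)! : ℕ) : ℝ) = ((n:ℝ)+1) * ((n ! : ℕ) : ℝ) := by
        rw [Nat.factorial_succ]; push_cast; ring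
      rw [hfs] at hccR
      have hFne : ((((n+1)+(j+1))! : ℕ) : ℝ) ≠ 0 := by positivity
      have hCne : ((((n+1)+(j+1)).choose (j+1) : ℕ) : ℝ) ≠ 0 := ne_of_gt hCpos
      rw [div_eq_iff hCne, ← hccR]
      have hn0 : ((n ! : ℕ) : ℝ) ≠ 0 := by positivity
      have hj0 : (((j+1)! : ℕ) : ℝ) ≠ 0 := by positivity
      field_simp
    rw [tsum_congr hterm, tsum_mul_left]
    have hzero : (∑' j : ℕ, ((n ! : ℝ) * ((j+1) !) / ((n+(j+1)+1)!)) * q^(j+1))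
        = B - ((n ! : ℝ) * ((0:ℕ) !) / ((n+0+1)!)) * q^(0:ℕ) := by
      rw [hB, Summable.tsum_eq_zero_add hBsummable]
      ring
    have hb0 : ((n ! : ℝ) * ((0:ℕ) !) / ((n+0+1)!)) * q^(0:ℕ) = 1/((n:ℝ)+1) := by
      have hfn : ((n+0+1)! : ℕ) = (n+1) * (n !) := by
        rw [show n+0+1 = n+1 from rfl, Nat.factorial_succ]
      rw [hfn]
      have hne : ((n !: ℕ) : ℝ) ≠ 0 := by positivity
      push_cast
      field_simp
      ring
    rw [hzero, hb0]
  have hp2 : (1:ℝ) - q = p := by rw [hqdef]; ring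
  rw [hp2] at hkey
  rw [hLHS, hRHS]
  rw [hkey]
  have hne : ((n:ℝ)+1) ≠ 0 := by positivity
  push_cast
  field_simp
  ring
end

section
/- Let T_N be negative binomial with parameters N ≥ 2 and p ∈ (0,1). Then E[((N-1)/(T_N + N - 1))^2] = p^N · ₂F₁(N-1, N-1; N; 1-p). -/
/-! The identity holds term by term: with `m = N - 1`, one has `(m + 1)_t = t! · C(t + m, m)` and
`(t + m) · (m)_t = m · (m + 1)_t`, so the `t`-th hypergeometric coefficient
`(m)_t² / ((m + 1)_t · t!)` equals `(m / (t + m))² · C(t + m, m)`. -/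

open scoped Nat

theorem add_mul_poch (x : ℝ) (t : ℕ) : (x + t) * poch x t = x * poch (x + 1) t := by
  have h := (Finset.prod_range_succ' (fun i : ℕ => x + i) t).symm.trans
    (Finset.prod_range_succ (fun i : ℕ => x + i) t)
  simp only [Nat.cast_add, Nat.cast_one, Nat.cast_zero, add_zero] at h
  have hshift : poch (x + 1) t = ∏ i ∈ Finset.range t, (x + (i + 1)) :=
    Finset.prod_congr rfl fun i _ => by ring
  rw [hshift, poch]
  linear_combination -h

theorem poch_natCast_s15 (m t : ℕ) : poch m t = m.ascFactorial t := by
  simp [poch, Nat.ascFactorial_eq_prod_range]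

theorem poch_natCast_add_one (m t : ℕ) : poch (m + 1) t = t ! * (t + m).choose m := by
  rw [← Nat.cast_add_one, poch_natCast_s15, Nat.ascFactorial_eq_factorial_mul_choose, add_comm m t,
    Nat.choose_symm_add]
  push_cast; ring

theorem poch_mul_poch_div_eq_sq_mul_choose (m t : ℕ) (hm : 0 < m) :
    poch m t * poch m t / (poch (m + 1) t * t !) = (m / (t + m) : ℝ) ^ 2 * (t + m).choose m := by
  have hrec := add_mul_poch m t
  rw [poch_natCast_add_one] at hrec ⊢
  have hm' : (0 : ℝ) < m := by exact_mod_cast hm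
  have hsum : (t + m : ℝ) ≠ 0 := by positivity
  have hpoch : poch m t = m * (t ! * (t + m).choose m) / (t + m) := by
    rw [eq_div_iff hsum, ← hrec]; ring
  have hchoose : ((t + m).choose m : ℝ) ≠ 0 := by
    exact_mod_cast (Nat.choose_pos (Nat.le_add_left m t)).ne'
  rw [hpoch]
  field_simp

theorem mvu_estimator_second_moment_general (N : ℕ) (hN : 2 ≤ N) (p : ℝ) :
    (∑' t : ℕ, (((N : ℝ) - 1) / (t + N - 1)) ^ 2 *
        (((t + N - 1).choose (N - 1) : ℝ) * p ^ N * (1 - p) ^ t))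
      = p ^ N * hyp2F1 ((N : ℝ) - 1) ((N : ℝ) - 1) N (1 - p) := by
  obtain ⟨m, rfl⟩ : ∃ m, N = m + 1 := ⟨N - 1, by omega⟩
  rw [hyp2F1, ← tsum_mul_left]
  refine tsum_congr fun t => ?_
  rw [show t + (m + 1) - 1 = t + m by omega, Nat.add_sub_cancel]
  push_cast
  rw [add_sub_cancel_right, poch_mul_poch_div_eq_sq_mul_choose m t (by omega)]
  ring_nf

/-- Second moment of the MVU estimator: for `T_N` negative binomial with
parameters `N ≥ 2` and `p ∈ (0,1)`,
`E[((N-1)/(T_N + N - 1))²] = p^N · ₂F₁(N-1, N-1; N; 1-p)`. -/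
theorem mvu_estimator_second_moment (N : ℕ) (hN : 2 ≤ N) (p : ℝ)
    (hp : 0 < p) (hp1 : p < 1) :
    (∑' t : ℕ, (((N : ℝ) - 1) / (t + N - 1)) ^ 2 *
        (((t + N - 1).choose (N - 1) : ℝ) * p ^ N * (1 - p) ^ t))
      = p ^ N * hyp2F1 ((N : ℝ) - 1) ((N : ℝ) - 1) N (1 - p) :=
  mvu_estimator_second_moment_general N hN p
end

section
/- Let T_N be negative binomial with parameters N ≥ 2 and p ∈ (0,1). The variance of the MVU estimator p̂_mvu = (N-1)/(T_N + N - 1) equals Σ_{n=1}^∞ p^2 (1-p)^n / C(N-1+n, n). -/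
open Finset Polynomial
open scoped fwdDiff

lemma fd_pow : ∀ (d K : ℕ), d < K → (fwdDiff (1:ℝ))^[K] (fun x : ℝ => x ^ d) = 0 := by
  intro d
  induction d using Nat.strong_induction_on with
  | _ d ih =>
    intro K hK
    obtain ⟨K, rfl⟩ : ∃ K', K = K' + 1 := ⟨K - 1, by omega⟩
    rw [Function.iterate_succ_apply]
    have hΔ : fwdDiff (1:ℝ) (fun x : ℝ => x ^ d)
        = ∑ j ∈ range d, (d.choose j : ℝ) • (fun x : ℝ => x ^ j) := by
      funext x
      simp only [fwdDiff, Finset.sum_apply, Pi.smul_apply, smul_eq_mul]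
      rw [add_pow]
      rw [Finset.sum_range_succ]
      simp [mul_comm]
    rw [hΔ, fwdDiff_iter_finset_sum]
    refine Finset.sum_eq_zero fun j hj => ?_
    have hjd := mem_range.mp hj
    rw [fwdDiff_iter_const_smul, ih j hjd K (by omega)]
    simp

lemma fd_zero_fun (K : ℕ) : (fwdDiff (1:ℝ))^[K] (0 : ℝ → ℝ) = 0 := by
  have := fwdDiff_iter_const_smul (h := (1:ℝ)) (0 : ℝ) (0 : ℝ → ℝ) K
  simpa using this

lemma fd_poly (P : Polynomial ℝ) (K : ℕ) (h : P.degree < K) :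
    (fwdDiff (1:ℝ))^[K] (fun x => P.eval x) = 0 := by
  rcases eq_or_ne P 0 with rfl | hP
  · simp only [eval_zero]; exact fd_zero_fun K
  · have hnd : P.natDegree < K := by
      have := Polynomial.degree_eq_natDegree hP
      rw [this] at h
      exact_mod_cast h
    have hfun : (fun x => P.eval x)
        = ∑ i ∈ range (P.natDegree + 1), P.coeff i • (fun x : ℝ => x ^ i) := by
      funext x
      simp only [Finset.sum_apply, Pi.smul_apply, smul_eq_mul]
      exact P.eval_eq_sum_range x
    rw [hfun, fwdDiff_iter_finset_sum]
    refine Finset.sum_eq_zero fun i hi => ?_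
    have hik : i < K := by have := mem_range.mp hi; omega
    rw [fwdDiff_iter_const_smul, fd_pow i K hik]
    simp

lemma fd_inv : ∀ (K : ℕ) (c y : ℝ), 0 < y + c →
    (fwdDiff (1:ℝ))^[K] (fun x => (x + c)⁻¹) y
      = (-1)^K * K.factorial / ∏ i ∈ range (K+1), (y + c + i) := by
  intro K
  induction K with
  | zero => intro c y hy; simp
  | succ K ih =>
    intro c y hy
    rw [Function.iterate_succ_apply', fwdDiff]
    rw [ih c (y+1) (by linarith), ih c y hy]
    have hpos : ∀ i : ℕ, (0:ℝ) < y + c + i := by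
      intro i
      have : (0:ℝ) ≤ i := Nat.cast_nonneg i
      linarith
    have h1 : ∏ i ∈ range (K+1), (y + 1 + c + i) = (∏ i ∈ range (K+2), (y + c + i)) / (y + c) := by
      rw [Finset.prod_range_succ' (fun i => y + c + i) (K+1)]
      have : ∀ i ∈ range (K+1), y + 1 + c + i = y + c + (i+1 : ℕ) := by
        intro i _; push_cast; ring
      rw [Finset.prod_congr rfl this]
      field_simp
      simp
    have h2 : ∏ i ∈ range (K+2), (y + c + i) = (∏ i ∈ range (K+1), (y + c + i)) * (y + c + (K+1)) := by
      rw [Finset.prod_range_succ]; push_cast; ring_nf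
    have hP1 : (0:ℝ) < ∏ i ∈ range (K+1), (y + c + i) := Finset.prod_pos fun i _ => hpos i
    have hP2 : (0:ℝ) < ∏ i ∈ range (K+2), (y + c + i) := Finset.prod_pos fun i _ => hpos i
    rw [h1]
    rw [Nat.factorial_succ]
    push_cast
    rw [h2]
    field_simp
    ring

lemma prod_choose (n t : ℕ) :
    (∏ i ∈ range n, ((t:ℝ) + i + 1)) = n.factorial * ((t + n).choose n) := by
  induction n with
  | zero => simp
  | succ n ih =>
    rw [Finset.prod_range_succ, ih]
    have h := Nat.add_one_mul_choose_eq (t + n) n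
    have hcast : ((t:ℝ) + n + 1) * ((t + n).choose n)
        = (((t + n + 1).choose (n + 1) : ℕ) : ℝ) * ((n:ℝ) + 1) := by
      exact_mod_cast congrArg (fun z : ℕ => (z : ℝ)) h
    have : t + (n + 1) = t + n + 1 := by omega
    rw [this, Nat.factorial_succ]
    push_cast
    nlinarith [hcast]

lemma prod_sub_eq : ∀ K : ℕ, (∏ i ∈ range K, ((i:ℝ) - K)) = (-1)^K * K.factorial := by
  intro K
  have h1 : ∀ i ∈ range K, ((i:ℝ) - K) = -(((K - i : ℕ) : ℝ)) := by
    intro i hi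
    have hi' := mem_range.mp hi
    rw [Nat.cast_sub hi'.le]
    ring
  rw [Finset.prod_congr rfl h1]
  have hneg : (∏ i ∈ range K, -(((K - i : ℕ) : ℝ)))
      = (-1)^K * ∏ i ∈ range K, (((K - i : ℕ) : ℝ)) := by
    rw [show (fun i => -(((K - i : ℕ) : ℝ))) = fun i => (-1) * (((K - i : ℕ) : ℝ)) from funext fun i => by ring]
    rw [Finset.prod_mul_distrib, Finset.prod_const, Finset.card_range]
  rw [hneg]
  congr 1
  have h2 : (∏ i ∈ range K, ((K - i : ℕ) : ℝ)) = ((∏ i ∈ range K, (K - i) : ℕ) : ℝ) := by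
    push_cast; rfl
  rw [h2]
  have h3 : (∏ i ∈ range K, (K - i)) = ∏ i ∈ range K, (i + 1) := by
    have := Finset.prod_range_reflect (fun j => j + 1) K
    rw [← this]
    apply Finset.prod_congr rfl
    intro i hi
    have := mem_range.mp hi
    omega
  rw [h3, Finset.prod_range_add_one_eq_factorial]

lemma key_ident (K m : ℕ) :
    ∑ k ∈ range (K+1), (-1:ℝ)^k * (K.choose k) *
      (if k ≤ m then ((K:ℝ)+1)/(((m - k : ℕ):ℝ) + K + 1) * (((m-k+K).choose K : ℕ) : ℝ) else 0)
    = 1 / (((K + 1 + m).choose m : ℕ) : ℝ) := by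
  classical
  set a : ℝ := (K:ℝ) + 1 with ha
  have haK : a = ((K+1 : ℕ) : ℝ) := by push_cast [ha]; ring
  set Pnum : Polynomial ℝ := ∏ i ∈ range K, (X + C ((i:ℝ)+1)) with hPnum
  have hmono : ∀ i ∈ range K, (X + C ((i:ℝ)+1)).Monic := fun i _ => monic_X_add_C _
  have hPmonic : Pnum.Monic := monic_prod_of_monic _ _ hmono
  have hPne : Pnum ≠ 0 := hPmonic.ne_zero
  have hmonic : (X - C (-a)).Monic := monic_X_sub_C _
  set Q : Polynomial ℝ := Pnum /ₘ (X - C (-a)) with hQ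
  have hPeval : ∀ x : ℝ, Pnum.eval x = ∏ i ∈ range K, (x + i + 1) := by
    intro x
    simp only [hPnum, eval_prod, eval_add, eval_X, eval_C]
    exact Finset.prod_congr rfl fun i _ => by ring
  have hPa : Pnum.eval (-a) = (-1)^K * K.factorial := by
    rw [hPeval, ← prod_sub_eq K]
    apply Finset.prod_congr rfl
    intro i _
    rw [ha]; ring
  have hfact : ∀ x : ℝ, Pnum.eval x = (x + a) * Q.eval x + (-1)^K * K.factorial := by
    intro x
    conv_lhs => rw [← modByMonic_add_div Pnum (X - C (-a))]
    rw [modByMonic_X_sub_C_eq_C_eval, hPa]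
    simp only [eval_add, eval_mul, eval_sub, eval_X, eval_C, eval_pow]
    ring
  have hQdeg : Q.degree < (K : WithBot ℕ) := by
    have h1 : Q.degree < Pnum.degree :=
      degree_divByMonic_lt Pnum (X - C (-a)) hPne (by rw [degree_X_sub_C]; norm_num)
    have h2 : Pnum.degree = (K : WithBot ℕ) := by
      rw [Polynomial.degree_eq_natDegree hPne]
      norm_cast
      rw [hPnum, Polynomial.natDegree_prod _ _ (fun i hi => (hmono i hi).ne_zero)]
      simp only [Polynomial.natDegree_X_add_C, Finset.sum_const, Finset.card_range, smul_eq_mul, mul_one]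
    rwa [h2] at h1
  set F : ℝ → ℝ := fun x => (a / K.factorial) * Q.eval x + ((-1)^K * a) * (x + a)⁻¹ with hF
  have hKfac : (K.factorial : ℝ) ≠ 0 := by positivity
  have hF_eval : ∀ x : ℝ, x + a ≠ 0 → F x = a * Pnum.eval x / (K.factorial * (x + a)) := by
    intro x hx
    rw [hF]
    simp only
    rw [hfact x]
    field_simp
  have hF_nat : ∀ t : ℕ, F t = a / ((t:ℝ) + K + 1) * (((t+K).choose K : ℕ) : ℝ) := by
    intro t
    have hx : (t:ℝ) + a ≠ 0 := by rw [ha]; positivity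
    rw [hF_eval t hx, hPeval, prod_choose K t]
    rw [ha]
    field_simp
    ring
  have hF_neg : ∀ k : ℕ, m < k → k ≤ K → F ((m:ℝ) - k) = 0 := by
    intro k hmk hkK
    have hkK' : (k:ℝ) ≤ K := by exact_mod_cast hkK
    have hx : ((m:ℝ) - k) + a ≠ 0 := by
      rw [ha]
      have : (0:ℝ) ≤ m := Nat.cast_nonneg m
      nlinarith
    rw [hF_eval _ hx, hPeval]
    have hmem : k - m - 1 ∈ range K := by
      rw [mem_range]; omega
    rw [Finset.prod_eq_zero hmem]
    · simp
    · have h1 : ((k - m - 1 : ℕ) : ℝ) = (k:ℝ) - m - 1 := by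
        have h2 : (k - m - 1 : ℕ) + (m + 1) = k := by omega
        have h3 := congrArg (fun z : ℕ => (z : ℝ)) h2
        push_cast at h3
        linarith
      rw [h1]
      ring
  have hsum_eq : ∑ k ∈ range (K+1), (-1:ℝ)^k * (K.choose k) *
      (if k ≤ m then ((K:ℝ)+1)/(((m - k : ℕ):ℝ) + K + 1) * (((m-k+K).choose K : ℕ) : ℝ) else 0)
      = ∑ k ∈ range (K+1), (-1:ℝ)^k * (K.choose k) * F ((m:ℝ) - k) := by
    apply Finset.sum_congr rfl
    intro k hk
    have hk' := mem_range.mp hk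
    by_cases hkm : k ≤ m
    · rw [if_pos hkm]
      have hc : ((m - k : ℕ) : ℝ) = (m:ℝ) - k := by
        rw [Nat.cast_sub hkm]
      rw [← hc, hF_nat (m - k), ha]
    · rw [if_neg hkm, hF_neg k (by omega) (by omega), mul_zero]
  rw [hsum_eq]
  have hrefl : ∑ k ∈ range (K+1), (-1:ℝ)^k * (K.choose k) * F ((m:ℝ) - k)
      = (fwdDiff (1:ℝ))^[K] F ((m:ℝ) - K) := by
    rw [fwdDiff_iter_eq_sum_shift, ← Finset.sum_range_reflect]
    apply Finset.sum_congr rfl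
    intro k hk
    have hk' := mem_range.mp hk
    have e1 : K + 1 - 1 - k = K - k := by omega
    have e3 : K.choose (K - k) = K.choose k := Nat.choose_symm (by omega)
    rw [e1, e3]
    have e4 : (m:ℝ) - ((K - k : ℕ):ℝ) = (m:ℝ) - K + k • (1:ℝ) := by
      rw [nsmul_eq_mul, mul_one, Nat.cast_sub (by omega : k ≤ K)]
      ring
    rw [e4, zsmul_eq_mul]
    push_cast
    ring
  rw [hrefl]
  have hFdecomp : F = (a / K.factorial) • (fun x : ℝ => Q.eval x)
      + ((-1:ℝ)^K * a) • (fun x : ℝ => (x + a)⁻¹) := by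
    funext x
    simp [hF, smul_eq_mul]
  have hy : (0:ℝ) < ((m:ℝ) - K) + a := by
    rw [ha]
    have : (0:ℝ) ≤ m := Nat.cast_nonneg m
    linarith
  rw [hFdecomp, fwdDiff_iter_add, fwdDiff_iter_const_smul, fwdDiff_iter_const_smul]
  simp only [Pi.add_apply, Pi.smul_apply, smul_eq_mul]
  rw [fd_poly Q K hQdeg, fd_inv K a ((m:ℝ) - K) hy]
  simp only [Pi.zero_apply, mul_zero, zero_add]
  have hprod : ∏ i ∈ range (K+1), (((m:ℝ) - K) + a + i)
      = (K+1).factorial * (((m + (K+1)).choose (K+1) : ℕ) : ℝ) := by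
    rw [← prod_choose (K+1) m]
    apply Finset.prod_congr rfl
    intro i _
    rw [ha]; ring
  rw [hprod]
  have hchoose : ((m + (K+1)).choose (K+1) : ℕ) = (K + 1 + m).choose m := by
    rw [show m + (K+1) = K+1+m by omega]
    have := Nat.choose_symm (show m ≤ K + 1 + m by omega)
    rwa [show K + 1 + m - m = K + 1 by omega] at this
  rw [hchoose]
  have hC : (((K + 1 + m).choose m : ℕ) : ℝ) ≠ 0 := by
    have := Nat.choose_pos (show m ≤ K + 1 + m by omega)
    positivity
  have hsq : (-1:ℝ)^K * (-1:ℝ)^K = 1 := by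
    rw [← pow_add]
    exact Even.neg_one_pow ⟨K, rfl⟩
  have hfacsucc : ((K+1).factorial : ℝ) = ((K:ℝ)+1) * K.factorial := by
    rw [Nat.factorial_succ]; push_cast; ring
  rw [ha, hfacsucc]
  have hKfac1 : ((K.factorial : ℕ) : ℝ) ≠ 0 := hKfac
  field_simp
  rw [sq]
  nlinarith [hsq]

/-- Variance of the MVU estimator `p̂_mvu = (N-1)/(T_N + N - 1)`: for `T_N`
negative binomial with parameters `N ≥ 2` and `p ∈ (0,1)`,
`Var(p̂_mvu) = E[(p̂_mvu - p)²] = Σ_{n=1}^∞ p²(1-p)^n / C(N-1+n, n)`. -/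
theorem mvu_estimator_variance (N : ℕ) (hN : 2 ≤ N) (p : ℝ)
    (hp : 0 < p) (hp1 : p < 1) :
    (∑' t : ℕ, (((N : ℝ) - 1) / (t + N - 1) - p) ^ 2 *
        (((t + N - 1).choose (N - 1) : ℝ) * p ^ N * (1 - p) ^ t))
      = ∑' n : ℕ, p ^ 2 * (1 - p) ^ (n + 1) / ((N - 1 + (n + 1)).choose (n + 1) : ℝ) := by
  obtain ⟨K, rfl⟩ : ∃ K, N = K + 2 := ⟨N - 2, by omega⟩
  set q : ℝ := 1 - p with hqdef
  have hq0 : 0 < q := by simp [hqdef]; linarith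
  have hq1 : q < 1 := by simp [hqdef]; linarith
  have hqn : ‖q‖ < 1 := by rw [Real.norm_eq_abs, abs_of_pos hq0]; exact hq1
  have hpq : p = 1 - q := by simp [hqdef]
  set f : ℕ → ℝ := fun t => ((K:ℝ)+1) / ((t:ℝ) + K + 1) with hfdef
  set g : ℕ → ℝ := fun t => f t * (((t+K).choose K : ℕ) : ℝ) with hgdef
  have hden : ∀ t : ℕ, (0:ℝ) < (t:ℝ) + K + 1 := by
    intro t
    have h1 : (0:ℝ) ≤ t := Nat.cast_nonneg t
    have h2 : (0:ℝ) ≤ K := Nat.cast_nonneg K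
    linarith
  have hf_pos : ∀ t, 0 < f t := by
    intro t
    apply div_pos _ (hden t)
    have : (0:ℝ) ≤ K := Nat.cast_nonneg K
    linarith
  have hf_le : ∀ t, f t ≤ 1 := by
    intro t
    rw [hfdef, div_le_one (hden t)]
    have : (0:ℝ) ≤ t := Nat.cast_nonneg t
    linarith
  -- f t * C(t+K+1,K+1) = C(t+K,K)
  have hfc : ∀ t : ℕ, f t * (((t+K+1).choose (K+1) : ℕ) : ℝ) = (((t+K).choose K : ℕ) : ℝ) := by
    intro t
    have h := Nat.add_one_mul_choose_eq (t+K) K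
    have hc : ((t:ℝ) + K + 1) * (((t+K).choose K : ℕ) : ℝ)
        = (((t+K+1).choose (K+1) : ℕ) : ℝ) * ((K:ℝ)+1) := by
      exact_mod_cast congrArg (fun z : ℕ => (z : ℝ)) h
    rw [hfdef]
    field_simp
    linarith [hc]
  -- summabilities
  have SB : Summable (fun t : ℕ => (((t+K).choose K : ℕ) : ℝ) * q^t) := by
    have := summable_choose_mul_geometric_of_norm_lt_one (R := ℝ) K hqn
    exact this
  have SC : Summable (fun t : ℕ => (((t+K+1).choose (K+1) : ℕ) : ℝ) * q^t) := by
    have := summable_choose_mul_geometric_of_norm_lt_one (R := ℝ) (K+1) hqn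
    exact this
  have hg_nonneg : ∀ t, 0 ≤ g t * q^t := by
    intro t
    apply mul_nonneg (mul_nonneg (hf_pos t).le (Nat.cast_nonneg _)) (pow_nonneg hq0.le t)
  have hg_le : ∀ t, g t * q^t ≤ (((t+K).choose K : ℕ) : ℝ) * q^t := by
    intro t
    apply mul_le_mul_of_nonneg_right _ (pow_nonneg hq0.le t)
    rw [hgdef]
    calc f t * (((t+K).choose K : ℕ) : ℝ) ≤ 1 * (((t+K).choose K : ℕ) : ℝ) :=
      mul_le_mul_of_nonneg_right (hf_le t) (Nat.cast_nonneg _)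
    _ = _ := one_mul _
  have Sg : Summable (fun t : ℕ => g t * q^t) :=
    Summable.of_nonneg_of_le hg_nonneg hg_le SB
  have expand : ∀ t : ℕ, ((((K+2:ℕ):ℝ) - 1) / ((t:ℝ) + ((K+2:ℕ):ℝ) - 1) - p)^2 *
        ((((t + (K+2) - 1).choose ((K+2) - 1) : ℕ):ℝ) * p^(K+2) * q^t)
      = (p^(K+2) * (g t * q^t) - (2*p^(K+3)) * ((((t+K).choose K : ℕ):ℝ) * q^t))
        + p^(K+4) * ((((t+K+1).choose (K+1) : ℕ):ℝ) * q^t) := by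
    intro t
    have hidx : t + (K+2) - 1 = t + K + 1 := by omega
    have hidx2 : (K+2) - 1 = K + 1 := by omega
    rw [hidx, hidx2]
    have hcast : (((K+2:ℕ):ℝ) - 1) = (K:ℝ) + 1 := by push_cast; ring
    have hcast2 : ((t:ℝ) + ((K+2:ℕ):ℝ) - 1) = (t:ℝ) + K + 1 := by push_cast; ring
    rw [hcast, hcast2]
    have h1 := hfc t
    have hgt : g t = f t * (((t+K).choose K : ℕ) : ℝ) := rfl
    have hft : f t = ((K:ℝ)+1) / ((t:ℝ) + K + 1) := rfl
    rw [hgt, ← h1, ← hft]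
    ring
  rw [tsum_congr expand]
  have S1 := Sg.mul_left (p^(K+2))
  have S2 := SB.mul_left (2*p^(K+3))
  have S3 := SC.mul_left (p^(K+4))
  rw [Summable.tsum_add (S1.sub S2) S3, Summable.tsum_sub S1 S2, tsum_mul_left, tsum_mul_left, tsum_mul_left]
  rw [tsum_choose_mul_geometric_of_norm_lt_one K hqn]
  have : ∑' (t:ℕ), (((t+K+1).choose (K+1) : ℕ):ℝ) * q^t = 1 / (1-q)^(K+2) :=
    tsum_choose_mul_geometric_of_norm_lt_one (K+1) hqn
  rw [this, ← hpq]
  have hpne : p ≠ 0 := ne_of_gt hp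
  have heval : p^(K+2) * (∑' t, g t * q^t) - 2*p^(K+3) * (1/p^(K+1)) + p^(K+4) * (1/p^(K+2))
      = p^(K+2) * (∑' t, g t * q^t) - p^2 := by
    field_simp
    ring
  rw [heval]
  -- RHS side
  set u : ℕ → ℝ := fun m => q^m / (((K+1+m).choose m : ℕ) : ℝ) with hudef
  have hCpos : ∀ m : ℕ, (0:ℝ) < (((K+1+m).choose m : ℕ) : ℝ) := by
    intro m
    exact_mod_cast Nat.choose_pos (show m ≤ K + 1 + m by omega)
  have hu_nonneg : ∀ m, 0 ≤ u m := fun m => div_nonneg (pow_nonneg hq0.le m) (hCpos m).le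
  have hu_le : ∀ m, u m ≤ q^m := by
    intro m
    rw [hudef]
    have h1 : (1:ℝ) ≤ (((K+1+m).choose m : ℕ) : ℝ) := by
      exact_mod_cast Nat.succ_le_of_lt (Nat.choose_pos (show m ≤ K + 1 + m by omega))
    exact div_le_self (pow_nonneg hq0.le m) h1
  have Su : Summable u :=
    Summable.of_nonneg_of_le hu_nonneg hu_le (summable_geometric_of_lt_one hq0.le hq1)
  -- shift machinery
  set Fk : ℕ → ℕ → ℝ := fun k m => (if k ≤ m then g (m-k) else 0) * q^m with hFkdef
  have hFk_supp : ∀ k, Function.support (Fk k) ⊆ Set.range (fun t => t + k) := by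
    intro k m hm
    have hkm : k ≤ m := by
      by_contra hc
      apply hm
      simp [hFkdef, if_neg hc]
    exact ⟨m - k, by simpa using Nat.sub_add_cancel hkm⟩
  have hFk_comp : ∀ k, ∀ t:ℕ, Fk k (t + k) = q^k * (g t * q^t) := by
    intro k t
    simp only [hFkdef, if_pos (Nat.le_add_left k t), Nat.add_sub_cancel, pow_add]
    ring
  have hshift : ∀ k : ℕ, q^k * (∑' t, g t * q^t) = ∑' m, Fk k m := by
    intro k
    rw [← tsum_mul_left]
    rw [tsum_congr (fun t => (hFk_comp k t).symm)]
    exact Function.Injective.tsum_eq (add_left_injective k) (hFk_supp k)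
  have SFk : ∀ k : ℕ, Summable (Fk k) := by
    intro k
    rw [← Function.Injective.summable_iff (add_left_injective k)]
    · apply Summable.congr (Sg.mul_left (q^k))
      intro t
      exact (hFk_comp k t).symm
    · intro m hm
      by_contra hc
      exact hm (hFk_supp k (by simpa using hc))
  have hbin : p^K = ∑ k ∈ range (K+1), (-1:ℝ)^k * (K.choose k) * q^k := by
    rw [hpq, show (1:ℝ) - q = -q + 1 by ring, add_pow]
    apply Finset.sum_congr rfl
    intro k _
    rw [neg_pow]
    ring
  have hkey : p^K * (∑' t, g t * q^t) = ∑' m, u m := by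
    rw [hbin, Finset.sum_mul]
    have h2 : ∀ k ∈ range (K+1), (-1:ℝ)^k * (K.choose k) * q^k * (∑' t, g t * q^t)
        = ∑' m, ((-1:ℝ)^k * (K.choose k)) * Fk k m := by
      intro k _
      rw [mul_assoc, hshift k, ← tsum_mul_left]
    rw [Finset.sum_congr rfl h2, ← Summable.tsum_finsetSum (fun k _ => (SFk k).mul_left _)]
    apply tsum_congr
    intro m
    have h3 : ∀ k, ((-1:ℝ)^k * (K.choose k)) * Fk k m
        = ((-1:ℝ)^k * (K.choose k) *
            (if k ≤ m then ((K:ℝ)+1)/(((m - k : ℕ):ℝ) + K + 1) * (((m-k+K).choose K : ℕ) : ℝ) else 0)) * q^m := by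
      intro k
      simp only [hFkdef]
      split_ifs with h
      · have : g (m-k) = ((K:ℝ)+1)/(((m - k : ℕ):ℝ) + K + 1) * (((m-k+K).choose K : ℕ) : ℝ) := rfl
        rw [this]
        ring
      · ring
    rw [Finset.sum_congr rfl (fun k _ => h3 k), ← Finset.sum_mul, key_ident K m]
    rw [hudef]
    ring
  -- final assembly
  have Su1 : Summable (fun n => u (n+1)) := (summable_nat_add_iff 1).2 Su
  have hu0 : u 0 = 1 := by simp [hudef]
  have hzero : ∑' m, u m = 1 + ∑' n, u (n+1) := by
    rw [Summable.tsum_eq_zero_add Su, hu0]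
  have hrhs : ∑' (n:ℕ), p ^ 2 * q ^ (n + 1) / (((K + 2 - 1 + (n + 1)).choose (n + 1) : ℕ) : ℝ)
      = p^2 * ∑' n, u (n+1) := by
    rw [← tsum_mul_left]
    apply tsum_congr
    intro n
    have hidx : K + 2 - 1 + (n + 1) = K + 1 + (n + 1) := by omega
    rw [hidx, hudef]
    ring
  rw [hrhs]
  have : p^(K+2) * (∑' t, g t * q^t) = p^2 * ∑' m, u m := by
    rw [← hkey, show K + 2 = 2 + K by omega, pow_add]
    ring
  rw [this, hzero]
  ring
end
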